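/- For every natural number n, the number of non-crossing perfect matchings of the set {1, 2, ..., 2n} equals the n-th Catalan number, i.e. equals (1/(n+1))·binomial(2n, n). -/

import Mathlib

/-- `M` is a perfect matching of `Fin (2*n)`: a collection of two-element blocks
such that every point lies in exactly one block. -/
def IsPerfectMatching (n : ℕ) (M : Finset (Finset (Fin (2 * n)))) : Prop :=
  (∀ p ∈ M, p.card = 2) ∧ ∀ x : Fin (2 * n), ∃! p, p ∈ M ∧ x ∈ p

/-- `M` is non-crossing: there are no pairs `{a, b}` and `{c, d}` in `M`
with `a < c < b < d`. -/
def IsNonCrossing (n : ℕ) (M : Finset (Finset (Fin (2 * n)))) : Prop :=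
  ¬ ∃ a b c d : Fin (2 * n), a < c ∧ c < b ∧ b < d ∧
      ({a, b} : Finset (Fin (2 * n))) ∈ M ∧ ({c, d} : Finset (Fin (2 * n))) ∈ M

open DyckStep Finset

namespace NCM

variable {n : ℕ}

/-- number of positions `i < k` with `v i = s`. -/
def cnt (v : Fin (2*n) → DyckStep) (s : DyckStep) (k : ℕ) : ℕ :=
  (Finset.univ.filter (fun i : Fin (2*n) => (i : ℕ) < k ∧ v i = s)).card

/-- height after `k` steps. -/
def ht (v : Fin (2*n) → DyckStep) (k : ℕ) : ℤ := (cnt v U k : ℤ) - cnt v D k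

lemma cnt_zero (v : Fin (2*n) → DyckStep) (s : DyckStep) : cnt v s 0 = 0 := by
  simp [cnt]

lemma cnt_add (v : Fin (2*n) → DyckStep) (s : DyckStep) {k₁ k₂ : ℕ} (h : k₁ ≤ k₂) :
    cnt v s k₂ = cnt v s k₁ +
      (Finset.univ.filter (fun i : Fin (2*n) => k₁ ≤ (i:ℕ) ∧ (i:ℕ) < k₂ ∧ v i = s)).card := by
  rw [cnt, cnt, ← Finset.card_union_of_disjoint]
  · congr 1
    ext i
    simp only [Finset.mem_filter, Finset.mem_union, Finset.mem_univ, true_and]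
    constructor
    · rintro ⟨h1, h2⟩
      rcases lt_or_ge (i:ℕ) k₁ with h' | h'
      · exact Or.inl ⟨h', h2⟩
      · exact Or.inr ⟨h', h1, h2⟩
    · rintro (⟨h1, h2⟩ | ⟨h1, h2, h3⟩)
      · exact ⟨lt_of_lt_of_le h1 h, h2⟩
      · exact ⟨h2, h3⟩
  · rw [Finset.disjoint_left]
    intro i hi hi'
    simp only [Finset.mem_filter] at hi hi'
    omega

lemma cnt_succ (v : Fin (2*n) → DyckStep) (s : DyckStep) (k : ℕ) :
    cnt v s (k+1) = cnt v s k +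
      if h : k < 2*n then (if v ⟨k, h⟩ = s then 1 else 0) else 0 := by
  rw [cnt_add v s (Nat.le_succ k)]
  congr 1
  by_cases h : k < 2*n
  · rw [dif_pos h]
    by_cases hs : v ⟨k, h⟩ = s
    · rw [if_pos hs]
      rw [show (Finset.univ.filter (fun i : Fin (2*n) => k ≤ (i:ℕ) ∧ (i:ℕ) < k+1 ∧ v i = s))
          = {⟨k, h⟩} from ?_, Finset.card_singleton]
      ext i
      simp only [Finset.mem_filter, Finset.mem_singleton, Finset.mem_univ, true_and]
      constructor
      · rintro ⟨h1, h2, h3⟩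
        exact Fin.ext (show (i:ℕ) = k by omega)
      · rintro rfl
        exact ⟨le_refl _, Nat.lt_succ_self _, hs⟩
    · rw [if_neg hs, Finset.card_eq_zero]
      ext i
      simp only [Finset.mem_filter, Finset.notMem_empty, iff_false, Finset.mem_univ, true_and,
        not_and]
      intro h1 h2
      have : i = ⟨k, h⟩ := Fin.ext (show (i:ℕ) = k by omega)
      subst this
      exact hs
  · rw [dif_neg h, Finset.card_eq_zero]
    ext i
    simp only [Finset.mem_filter, Finset.notMem_empty, iff_false, Finset.mem_univ, true_and,
      not_and]
    intro h1 h2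
    exact absurd (lt_of_le_of_lt h1 i.isLt) (by omega)

lemma ht_zero (v : Fin (2*n) → DyckStep) : ht v 0 = 0 := by simp [ht, cnt_zero]

lemma ht_succ_of_U (v : Fin (2*n) → DyckStep) {k : ℕ} (h : k < 2*n) (hU : v ⟨k, h⟩ = U) :
    ht v (k+1) = ht v k + 1 := by
  simp only [ht, cnt_succ, dif_pos h, hU]
  simp
  push_cast
  ring

lemma ht_succ_of_D (v : Fin (2*n) → DyckStep) {k : ℕ} (h : k < 2*n) (hD : v ⟨k, h⟩ = D) :
    ht v (k+1) = ht v k - 1 := by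
  have hU : v ⟨k, h⟩ ≠ U := by rw [hD]; simp
  simp only [ht, cnt_succ, dif_pos h, hD, if_pos rfl, if_neg hU]
  push_cast
  ring

lemma ht_succ_of_ge (v : Fin (2*n) → DyckStep) {k : ℕ} (h : ¬ k < 2*n) :
    ht v (k+1) = ht v k := by
  simp only [ht, cnt_succ, dif_neg h]
  push_cast
  ring

lemma ht_succ_le (v : Fin (2*n) → DyckStep) (k : ℕ) : ht v (k+1) ≤ ht v k + 1 := by
  by_cases h : k < 2*n
  · rcases (v ⟨k, h⟩).dichotomy with hU | hD
    · rw [ht_succ_of_U v h hU]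
    · rw [ht_succ_of_D v h hD]; omega
  · rw [ht_succ_of_ge v h]; omega

lemma le_ht_succ (v : Fin (2*n) → DyckStep) (k : ℕ) : ht v k - 1 ≤ ht v (k+1) := by
  by_cases h : k < 2*n
  · rcases (v ⟨k, h⟩).dichotomy with hU | hD
    · rw [ht_succ_of_U v h hU]; omega
    · rw [ht_succ_of_D v h hD]
  · rw [ht_succ_of_ge v h]; omega

/-- discrete IVT, going up -/
lemma ivt_up (v : Fin (2*n) → DyckStep) {i j : ℕ} (hij : i ≤ j) {t : ℤ}
    (h1 : ht v i ≤ t) (h2 : t ≤ ht v j) : ∃ m, i ≤ m ∧ m ≤ j ∧ ht v m = t := by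
  induction j, hij using Nat.le_induction with
  | base => exact ⟨i, le_refl _, le_refl _, le_antisymm h1 h2⟩
  | succ j hij ih =>
    rcases le_or_gt t (ht v j) with h | h
    · obtain ⟨m, hm1, hm2, hm3⟩ := ih h
      exact ⟨m, hm1, hm2.trans (Nat.le_succ j), hm3⟩
    · have := ht_succ_le v j
      exact ⟨j+1, hij.trans (Nat.le_succ j), le_refl _, by omega⟩

/-- discrete IVT, going down -/
lemma ivt_down (v : Fin (2*n) → DyckStep) {i j : ℕ} (hij : i ≤ j) {t : ℤ}
    (h1 : ht v j ≤ t) (h2 : t ≤ ht v i) : ∃ m, i ≤ m ∧ m ≤ j ∧ ht v m = t := by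
  induction j, hij using Nat.le_induction with
  | base => exact ⟨i, le_refl _, le_refl _, le_antisymm h1 h2⟩
  | succ j hij ih =>
    rcases le_or_gt (ht v j) t with h | h
    · obtain ⟨m, hm1, hm2, hm3⟩ := ih h
      exact ⟨m, hm1, hm2.trans (Nat.le_succ j), hm3⟩
    · have := le_ht_succ v j
      exact ⟨j+1, hij.trans (Nat.le_succ j), le_refl _, by omega⟩



/-- Dyck condition in terms of heights. -/
def IsDyck (v : Fin (2*n) → DyckStep) : Prop :=
  (∀ k, 0 ≤ ht v k) ∧ ht v (2*n) = 0

/-- the matching opener of position `j`: greatest `i ≤ j` with `ht i = ht (j+1)`. -/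
def gma (v : Fin (2*n) → DyckStep) (j : ℕ) : ℕ :=
  Nat.findGreatest (fun i => ht v i = ht v (j+1)) j

section Key

variable {v : Fin (2*n) → DyckStep} (hv : IsDyck v)

include hv

lemma gma_ht {j : ℕ} (hj : j < 2*n) (hD : v ⟨j, hj⟩ = D) :
    ht v (gma v j) = ht v (j+1) := by
  have hstep : ht v (j+1) = ht v j - 1 := ht_succ_of_D v hj hD
  obtain ⟨m, hm0, hmj, hmh⟩ := ivt_up v (Nat.zero_le j) (t := ht v (j+1))
    (by rw [ht_zero]; exact hv.1 (j+1)) (by omega)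
  exact Nat.findGreatest_spec (P := fun i => ht v i = ht v (j+1)) hmj hmh

lemma gma_lt {j : ℕ} (hj : j < 2*n) (hD : v ⟨j, hj⟩ = D) : gma v j < j := by
  have h1 := gma_ht hv hj hD
  have h2 : gma v j ≤ j := Nat.findGreatest_le (P := fun i => ht v i = ht v (j+1)) j
  have hstep : ht v (j+1) = ht v j - 1 := ht_succ_of_D v hj hD
  rcases lt_or_eq_of_le h2 with h | h
  · exact h
  · rw [h] at h1; omega

lemma gma_lt_ht {j : ℕ} (hj : j < 2*n) (hD : v ⟨j, hj⟩ = D)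
    {m : ℕ} (hm1 : gma v j < m) (hm2 : m ≤ j) : ht v (j+1) < ht v m := by
  have hstep : ht v (j+1) = ht v j - 1 := ht_succ_of_D v hj hD
  by_contra hle
  push_neg at hle
  obtain ⟨m', hm'1, hm'2, hm'3⟩ := ivt_up v hm2 hle (by omega)
  exact Nat.findGreatest_is_greatest (P := fun i => ht v i = ht v (j+1)) (lt_of_lt_of_le hm1 hm'1) hm'2 hm'3

lemma gma_U {j : ℕ} (hj : j < 2*n) (hD : v ⟨j, hj⟩ = D) :
    ∃ h : gma v j < 2*n, v ⟨gma v j, h⟩ = U := by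
  have hlt := gma_lt hv hj hD
  have h2n : gma v j < 2*n := lt_trans hlt hj
  refine ⟨h2n, ?_⟩
  have hup : ht v (j+1) < ht v (gma v j + 1) :=
    gma_lt_ht hv hj hD (Nat.lt_succ_self _) hlt
  have h0 := gma_ht hv hj hD
  rcases (v ⟨gma v j, h2n⟩).dichotomy with hU | hDD
  · exact hU
  · have := ht_succ_of_D v h2n hDD
    omega

/-- each opener is closed by a unique closer. -/
lemma opener_closed {i : ℕ} (hi : i < 2*n) (hU : v ⟨i, hi⟩ = U) :
    ∃! j : ℕ, ∃ hj : j < 2*n, v ⟨j, hj⟩ = D ∧ gma v j = i := by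
  have hstep : ht v (i+1) = ht v i + 1 := ht_succ_of_U v hi hU
  have hex : ∃ m, (i+1 ≤ m ∧ m ≤ 2*n) ∧ ht v m = ht v i := by
    obtain ⟨m, h1, h2, h3⟩ := ivt_down v (show i+1 ≤ 2*n from hi) (t := ht v i)
      (by rw [hv.2]; exact hv.1 i) (by omega)
    exact ⟨m, ⟨h1, h2⟩, h3⟩
  classical
  set K := Nat.find hex with hK
  obtain ⟨⟨hK1, hK2⟩, hK3⟩ := Nat.find_spec hex
  have hKmin : ∀ m, i+1 ≤ m → m < K → ht v m ≠ ht v i := by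
    intro m h1 h2 h3
    exact Nat.find_min hex h2 ⟨⟨h1, le_trans (le_of_lt h2) hK2⟩, h3⟩
  -- all heights in (i, K) are > ht v i
  have hgt : ∀ m, i+1 ≤ m → m < K → ht v i < ht v m := by
    intro m h1 h2
    by_contra hle
    push_neg at hle
    obtain ⟨m', h'1, h'2, h'3⟩ := ivt_down v (show i+1 ≤ m from h1) hle (by omega)
    exact hKmin m' h'1 (lt_of_le_of_lt h'2 h2) h'3
  have hKi : i + 1 < K := by
    rcases lt_or_eq_of_le hK1 with h | h
    · exact h
    · rw [← h] at hK3; omega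
  set j := K - 1 with hj
  have hjK : j + 1 = K := by omega
  have hj2n : j < 2*n := by omega
  have hhj : ht v i < ht v j := hgt j (by omega) (by omega)
  have hjD : v ⟨j, hj2n⟩ = D := by
    rcases (v ⟨j, hj2n⟩).dichotomy with hU' | hD'
    · have := ht_succ_of_U v hj2n hU'
      rw [hjK, hK3] at this; omega
    · exact hD'
  have hjp1 : ht v (j+1) = ht v i := by rw [hjK]; exact hK3
  have hgma : gma v j = i := by
    have h1 : i ≤ gma v j := Nat.le_findGreatest (P := fun m => ht v m = ht v (j+1)) (by omega) (by rw [hjp1])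
    have h2 : gma v j ≤ i := by
      by_contra hc
      push_neg at hc
      have h3 := gma_ht hv hj2n hjD
      rw [hjp1] at h3
      have h4 : gma v j ≤ j := Nat.findGreatest_le (P := fun m => ht v m = ht v (j+1)) j
      exact absurd h3 (ne_of_gt (hgt _ hc (by omega)))
    omega
  refine ⟨j, ⟨hj2n, hjD, hgma⟩, ?_⟩
  rintro j' ⟨hj', hD', hg'⟩
  have h1 : ht v (j'+1) = ht v i := by
    have := gma_ht hv hj' hD'
    rw [hg'] at this; omega
  have hij' : i < j' := by rw [← hg']; exact gma_lt hv hj' hD'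
  have h2 : K ≤ j' + 1 := Nat.find_min' hex ⟨⟨by omega, by omega⟩, h1⟩
  have h3 : ¬ K ≤ j' := by
    intro hc
    have h5 := gma_lt_ht hv hj' hD' (by omega : gma v j' < K) hc
    have h4 : ht v K = ht v i := by rw [hK]; exact hK3
    omega
  omega

end Key

section Matching

variable {M : Finset (Finset (Fin (2*n)))}

lemma mem_unique (hM : IsPerfectMatching n M) {p q : Finset (Fin (2*n))} {x : Fin (2*n)}
    (hp : p ∈ M) (hq : q ∈ M) (hxp : x ∈ p) (hxq : x ∈ q) : p = q := by
  obtain ⟨r, -, hr⟩ := hM.2 x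
  rw [hr p ⟨hp, hxp⟩, hr q ⟨hq, hxq⟩]

lemma exists_partner (hM : IsPerfectMatching n M) (x : Fin (2*n)) :
    ∃ y, y ≠ x ∧ ({x, y} : Finset (Fin (2*n))) ∈ M := by
  obtain ⟨p, ⟨hpM, hxp⟩, -⟩ := hM.2 x
  obtain ⟨a, b, hab, rfl⟩ := Finset.card_eq_two.mp (hM.1 p hpM)
  rcases Finset.mem_insert.mp hxp with rfl | hxb
  · exact ⟨b, fun h => hab h.symm, hpM⟩
  · rw [Finset.mem_singleton] at hxb
    subst hxb
    exact ⟨a, fun h => hab h, by rwa [Finset.pair_comm]⟩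

/-- The partner of `x` in the matching `M`. -/
noncomputable def ptn (M : Finset (Finset (Fin (2*n)))) (x : Fin (2*n)) : Fin (2*n) :=
  if h : ∃ y, y ≠ x ∧ ({x, y} : Finset (Fin (2*n))) ∈ M then h.choose else x

lemma ptn_ne (hM : IsPerfectMatching n M) (x : Fin (2*n)) : ptn M x ≠ x := by
  rw [ptn, dif_pos (exists_partner hM x)]
  exact (exists_partner hM x).choose_spec.1

lemma ptn_mem (hM : IsPerfectMatching n M) (x : Fin (2*n)) :
    ({x, ptn M x} : Finset (Fin (2*n))) ∈ M := by
  rw [ptn, dif_pos (exists_partner hM x)]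
  exact (exists_partner hM x).choose_spec.2

lemma ptn_eq_of_mem (hM : IsPerfectMatching n M) {x y : Fin (2*n)} (hxy : y ≠ x)
    (hmem : ({x, y} : Finset (Fin (2*n))) ∈ M) : ptn M x = y := by
  have h1 := ptn_mem hM x
  have h2 : ({x, ptn M x} : Finset (Fin (2*n))) = {x, y} :=
    mem_unique hM h1 hmem (Finset.mem_insert_self _ _) (Finset.mem_insert_self _ _)
  have h3 : ptn M x ∈ ({x, y} : Finset (Fin (2*n))) := by
    rw [← h2]
    exact Finset.mem_insert.mpr (Or.inr (Finset.mem_singleton_self _))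
  rcases Finset.mem_insert.mp h3 with h | h
  · exact absurd h (ptn_ne hM x)
  · rwa [Finset.mem_singleton] at h

lemma ptn_ptn (hM : IsPerfectMatching n M) (x : Fin (2*n)) : ptn M (ptn M x) = x := by
  apply ptn_eq_of_mem hM (fun h => ptn_ne hM x h.symm)
  rw [Finset.pair_comm]
  exact ptn_mem hM x

lemma ptn_injective (hM : IsPerfectMatching n M) : Function.Injective (ptn M) := by
  intro x y h
  rw [← ptn_ptn hM x, h, ptn_ptn hM]

/-- The Dyck word associated to a matching. -/
noncomputable def wrd (M : Finset (Finset (Fin (2*n)))) : Fin (2*n) → DyckStep :=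
  fun i => if i < ptn M i then U else D

lemma wrd_eq_U_iff {i : Fin (2*n)} : wrd M i = U ↔ i < ptn M i := by
  rw [wrd]
  split_ifs with h
  · simp [h]
  · simpa using h

lemma wrd_eq_D_iff (hM : IsPerfectMatching n M) {i : Fin (2*n)} :
    wrd M i = D ↔ ptn M i < i := by
  rw [wrd]
  split_ifs with h
  · simp only [reduceCtorEq, false_iff]
    exact fun h' => absurd (lt_trans h h') (lt_irrefl i)
  · simp only [true_iff]
    exact lt_of_le_of_ne (le_of_not_gt h) (ptn_ne hM i)

lemma cnt_wrd_U (M : Finset (Finset (Fin (2*n)))) (k : ℕ) :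
    cnt (wrd M) U k =
      (Finset.univ.filter (fun i : Fin (2*n) => (i:ℕ) < k ∧ i < ptn M i)).card := by
  rw [cnt]
  congr 1
  ext i
  simp only [Finset.mem_filter, Finset.mem_univ, true_and]
  exact and_congr_right (fun _ => wrd_eq_U_iff)

lemma cnt_wrd_D (hM : IsPerfectMatching n M) (k : ℕ) :
    cnt (wrd M) D k =
      (Finset.univ.filter (fun i : Fin (2*n) => (i:ℕ) < k ∧ ptn M i < i)).card := by
  rw [cnt]
  congr 1
  ext i
  simp only [Finset.mem_filter, Finset.mem_univ, true_and]
  exact and_congr_right (fun _ => wrd_eq_D_iff hM)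

lemma wrd_isDyck (hM : IsPerfectMatching n M) : IsDyck (wrd M) := by
  have key : ∀ k, cnt (wrd M) D k ≤ cnt (wrd M) U k := by
    intro k
    rw [cnt_wrd_U, cnt_wrd_D hM]
    apply Finset.card_le_card_of_injOn (ptn M)
    · intro x hx
      simp only [Finset.mem_coe, Finset.mem_filter, Finset.mem_univ, true_and] at hx ⊢
      refine ⟨lt_trans (Fin.lt_iff_val_lt_val.mp hx.2) hx.1, ?_⟩
      rw [ptn_ptn hM]
      exact hx.2
    · exact Function.Injective.injOn (ptn_injective hM)
  have key2 : cnt (wrd M) U (2*n) ≤ cnt (wrd M) D (2*n) := by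
    rw [cnt_wrd_U, cnt_wrd_D hM]
    apply Finset.card_le_card_of_injOn (ptn M)
    · intro x hx
      simp only [Finset.mem_coe, Finset.mem_filter, Finset.mem_univ, true_and] at hx ⊢
      refine ⟨(ptn M x).isLt, ?_⟩
      rw [ptn_ptn hM]
      exact hx.2
    · exact Function.Injective.injOn (ptn_injective hM)
  constructor
  · intro k
    have := key k
    rw [ht]
    omega
  · have := key (2*n)
    rw [ht]
    omega

lemma ptn_left (hM : IsPerfectMatching n M) {a b : Fin (2*n)}
    (hab : ({a, b} : Finset (Fin (2*n))) ∈ M) (hne : a ≠ b) : ptn M a = b :=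
  ptn_eq_of_mem hM (Ne.symm hne) hab

lemma ptn_right (hM : IsPerfectMatching n M) {a b : Fin (2*n)}
    (hab : ({a, b} : Finset (Fin (2*n))) ∈ M) (hne : a ≠ b) : ptn M b = a :=
  ptn_eq_of_mem hM hne (by rwa [Finset.pair_comm])

lemma interval_lemma (hM : IsPerfectMatching n M) (hNC : IsNonCrossing n M)
    {a b x : Fin (2*n)} (hab : ({a, b} : Finset (Fin (2*n))) ∈ M)
    (h2 : a < x) (h3 : x < b) : a < ptn M x ∧ ptn M x < b := by
  have hxy := ptn_mem hM x
  have hne := ptn_ne hM x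
  have hya : ptn M x ≠ a := by
    intro h
    have hmm : a ∈ ({x, ptn M x} : Finset (Fin (2*n))) := by
      rw [← h]
      exact Finset.mem_insert.mpr (Or.inr (Finset.mem_singleton_self _))
    have heq := mem_unique hM hxy hab hmm (Finset.mem_insert_self _ _)
    have hxm : x ∈ ({a, b} : Finset (Fin (2*n))) := by
      rw [← heq]; exact Finset.mem_insert_self _ _
    rcases Finset.mem_insert.mp hxm with h' | h'
    · exact absurd h' (ne_of_gt h2)
    · rw [Finset.mem_singleton] at h'
      exact absurd h' (ne_of_lt h3)
  have hyb : ptn M x ≠ b := by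
    intro h
    have hmm : b ∈ ({x, ptn M x} : Finset (Fin (2*n))) := by
      rw [← h]
      exact Finset.mem_insert.mpr (Or.inr (Finset.mem_singleton_self _))
    have heq := mem_unique hM hxy hab hmm
      (Finset.mem_insert.mpr (Or.inr (Finset.mem_singleton_self _)))
    have hxm : x ∈ ({a, b} : Finset (Fin (2*n))) := by
      rw [← heq]; exact Finset.mem_insert_self _ _
    rcases Finset.mem_insert.mp hxm with h' | h'
    · exact absurd h' (ne_of_gt h2)
    · rw [Finset.mem_singleton] at h'
      exact absurd h' (ne_of_lt h3)
  constructor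
  · rcases lt_trichotomy (ptn M x) a with h | h | h
    · exact absurd ⟨ptn M x, x, a, b, h, h2, h3,
        by rwa [Finset.pair_comm] at hxy, hab⟩ hNC
    · exact absurd h hya
    · exact h
  · rcases lt_trichotomy (ptn M x) b with h | h | h
    · exact h
    · exact absurd h hyb
    · exact absurd ⟨a, b, x, ptn M x, h2, h3, h, hab, hxy⟩ hNC

lemma char_pair (hM : IsPerfectMatching n M) (hNC : IsNonCrossing n M)
    {a b : Fin (2*n)} (hab : ({a, b} : Finset (Fin (2*n))) ∈ M) (hlt : a < b) :
    ht (wrd M) ((b:ℕ)+1) = ht (wrd M) (a:ℕ) ∧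
    ∀ m : ℕ, (a:ℕ) < m → m ≤ (b:ℕ) → ht (wrd M) (a:ℕ) < ht (wrd M) m := by
  have hpa : ptn M a = b := ptn_left hM hab (ne_of_lt hlt)
  have hpb : ptn M b = a := ptn_right hM hab (ne_of_lt hlt)
  constructor
  · have hU := cnt_add (wrd M) U (show (a:ℕ) ≤ (b:ℕ)+1 by omega)
    have hD := cnt_add (wrd M) D (show (a:ℕ) ≤ (b:ℕ)+1 by omega)
    have hbij :
        (Finset.univ.filter (fun i : Fin (2*n) =>
          (a:ℕ) ≤ (i:ℕ) ∧ (i:ℕ) < (b:ℕ)+1 ∧ wrd M i = U)).card =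
        (Finset.univ.filter (fun i : Fin (2*n) =>
          (a:ℕ) ≤ (i:ℕ) ∧ (i:ℕ) < (b:ℕ)+1 ∧ wrd M i = D)).card := by
      apply Finset.card_bij' (fun x _ => ptn M x) (fun x _ => ptn M x)
      · intro x hx
        simp only [Finset.mem_filter, Finset.mem_univ, true_and] at hx ⊢
        obtain ⟨hx1, hx2, hx3⟩ := hx
        rw [wrd_eq_U_iff] at hx3
        have hD' : wrd M (ptn M x) = D := by
          rw [wrd_eq_D_iff hM, ptn_ptn hM]
          exact hx3
        by_cases hxa : x = a
        · subst hxa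
          rw [hpa]
          have hab' := Fin.lt_def.mp hlt
          exact ⟨by omega, by omega, by rwa [hpa] at hD'⟩
        · have h2 : a < x := lt_of_le_of_ne (by exact Fin.le_def.mpr hx1) (Ne.symm hxa)
          have h3 : x < b := by
            rcases lt_or_eq_of_le (show x ≤ b from Fin.le_def.mpr (by omega)) with h | h
            · exact h
            · subst h
              rw [hpb] at hx3
              exact absurd hx3 (not_lt_of_gt h2)
          obtain ⟨hy1, hy2⟩ := interval_lemma hM hNC hab h2 h3
          exact ⟨le_of_lt (Fin.lt_def.mp hy1), by have := Fin.lt_def.mp hy2; omega, hD'⟩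
      · intro x hx
        simp only [Finset.mem_filter, Finset.mem_univ, true_and] at hx ⊢
        obtain ⟨hx1, hx2, hx3⟩ := hx
        rw [wrd_eq_D_iff hM] at hx3
        have hU' : wrd M (ptn M x) = U := by
          rw [wrd_eq_U_iff, ptn_ptn hM]
          exact hx3
        by_cases hxb : x = b
        · subst hxb
          rw [hpb]
          have hab' := Fin.lt_def.mp hlt
          exact ⟨le_refl _, by omega, by rwa [hpb] at hU'⟩
        · have h3 : x < b := lt_of_le_of_ne (Fin.le_def.mpr (by omega)) hxb
          have h2 : a < x := by
            rcases lt_or_eq_of_le (show a ≤ x from Fin.le_def.mpr hx1) with h | h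
            · exact h
            · rw [← h, hpa] at hx3
              exact absurd hx3 (not_lt_of_gt (h ▸ h3))
          obtain ⟨hy1, hy2⟩ := interval_lemma hM hNC hab h2 h3
          exact ⟨le_of_lt (Fin.lt_def.mp hy1), by have := Fin.lt_def.mp hy2; omega, hU'⟩
      · intro x _; exact ptn_ptn hM x
      · intro x _; exact ptn_ptn hM x
    rw [ht, ht, hU, hD, hbij]
    push_cast
    ring
  · intro m hm1 hm2
    have hU := cnt_add (wrd M) U (show (a:ℕ) ≤ m by omega)
    have hD := cnt_add (wrd M) D (show (a:ℕ) ≤ m by omega)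
    set Am := Finset.univ.filter (fun i : Fin (2*n) =>
      (a:ℕ) ≤ (i:ℕ) ∧ (i:ℕ) < m ∧ wrd M i = U) with hAm
    set Bm := Finset.univ.filter (fun i : Fin (2*n) =>
      (a:ℕ) ≤ (i:ℕ) ∧ (i:ℕ) < m ∧ wrd M i = D) with hBm
    have haA : a ∈ Am := by
      simp only [hAm, Finset.mem_filter, Finset.mem_univ, true_and]
      exact ⟨le_refl _, hm1, wrd_eq_U_iff.mpr (hpa ▸ hlt)⟩
    have hinj : Bm.card ≤ (Am.erase a).card := by
      apply Finset.card_le_card_of_injOn (ptn M)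
      · intro x hx
        simp only [hBm, Finset.mem_coe, Finset.mem_filter, Finset.mem_univ, true_and] at hx
        obtain ⟨hx1, hx2, hx3⟩ := hx
        rw [wrd_eq_D_iff hM] at hx3
        have hxa : x ≠ a := by
          intro h
          rw [h, hpa] at hx3
          exact absurd (lt_trans hlt hx3) (lt_irrefl a)
        have h2 : a < x := lt_of_le_of_ne (Fin.le_def.mpr hx1) (Ne.symm hxa)
        have h3 : x < b := Fin.lt_def.mpr (by omega)
        obtain ⟨hy1, hy2⟩ := interval_lemma hM hNC hab h2 h3
        rw [Finset.mem_coe, Finset.mem_erase]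
        refine ⟨ne_of_gt hy1, ?_⟩
        simp only [hAm, Finset.mem_filter, Finset.mem_univ, true_and]
        refine ⟨le_of_lt (Fin.lt_def.mp hy1), ?_, ?_⟩
        · have := Fin.lt_def.mp hx3; omega
        · rw [wrd_eq_U_iff, ptn_ptn hM]
          exact hx3
      · exact Function.Injective.injOn (ptn_injective hM)
    have hcard : Bm.card + 1 ≤ Am.card := by
      have := Finset.card_erase_of_mem haA
      have hpos : 0 < Am.card := Finset.card_pos.mpr ⟨a, haA⟩
      omega
    rw [ht, ht, hU, hD]
    push_cast
    omega

lemma char_gma (hM : IsPerfectMatching n M) (hNC : IsNonCrossing n M)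
    {a b : Fin (2*n)} (hab : ({a, b} : Finset (Fin (2*n))) ∈ M) (hlt : a < b) :
    gma (wrd M) (b:ℕ) = (a:ℕ) := by
  obtain ⟨h1, h2⟩ := char_pair hM hNC hab hlt
  have hPa : ht (wrd M) (a:ℕ) = ht (wrd M) ((b:ℕ)+1) := h1.symm
  have hle : (a:ℕ) ≤ (b:ℕ) := le_of_lt (Fin.lt_def.mp hlt)
  have hg1 : (a:ℕ) ≤ gma (wrd M) (b:ℕ) :=
    Nat.le_findGreatest (P := fun i => ht (wrd M) i = ht (wrd M) ((b:ℕ)+1)) hle hPa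
  have hg2 : gma (wrd M) (b:ℕ) ≤ (b:ℕ) :=
    Nat.findGreatest_le (P := fun i => ht (wrd M) i = ht (wrd M) ((b:ℕ)+1)) _
  rcases lt_or_eq_of_le hg1 with h | h
  · have hspec : ht (wrd M) (gma (wrd M) (b:ℕ)) = ht (wrd M) ((b:ℕ)+1) :=
      Nat.findGreatest_spec (P := fun i => ht (wrd M) i = ht (wrd M) ((b:ℕ)+1)) hle hPa
    have := h2 _ h hg2
    omega
  · omega

lemma subset_of_wrd_eq {M₁ M₂ : Finset (Finset (Fin (2*n)))}
    (hM₁ : IsPerfectMatching n M₁) (hNC₁ : IsNonCrossing n M₁)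
    (hM₂ : IsPerfectMatching n M₂) (hNC₂ : IsNonCrossing n M₂)
    (hw : wrd M₁ = wrd M₂) : M₁ ⊆ M₂ := by
  have key : ∀ a b : Fin (2*n), ({a, b} : Finset (Fin (2*n))) ∈ M₁ → a < b →
      ({a, b} : Finset (Fin (2*n))) ∈ M₂ := by
    intro a b hab hlt
    have hg1 : gma (wrd M₁) (b:ℕ) = (a:ℕ) := char_gma hM₁ hNC₁ hab hlt
    have hbD : wrd M₂ b = D := by
      rw [← hw, wrd_eq_D_iff hM₁, ptn_right hM₁ hab (ne_of_lt hlt)]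
      exact hlt
    have hp2 : ptn M₂ b < b := (wrd_eq_D_iff hM₂).mp hbD
    have hmem2 : ({ptn M₂ b, b} : Finset (Fin (2*n))) ∈ M₂ := by
      rw [Finset.pair_comm]
      exact ptn_mem hM₂ b
    have hg2 : gma (wrd M₂) (b:ℕ) = ((ptn M₂ b : Fin (2*n)):ℕ) :=
      char_gma hM₂ hNC₂ hmem2 hp2
    have : ptn M₂ b = a := by
      apply Fin.ext
      rw [← hg2, ← hw, hg1]
    rw [← this]
    exact hmem2
  intro p hp
  obtain ⟨a, b, hne, rfl⟩ := Finset.card_eq_two.mp (hM₁.1 p hp)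
  rcases lt_or_gt_of_ne hne with h | h
  · exact key a b hp h
  · rw [Finset.pair_comm]
    rw [Finset.pair_comm] at hp
    exact key b a hp h

end Matching

lemma pair_inj {α : Type*} [DecidableEq α] [LinearOrder α] {a b c d : α}
    (h : ({a, b} : Finset α) = {c, d}) (h1 : a < b) (h2 : c < d) : a = c ∧ b = d := by
  have ha : a = c ∨ a = d := by
    have : a ∈ ({c, d} : Finset α) := by rw [← h]; exact Finset.mem_insert_self _ _
    simpa using this
  have hb : b = c ∨ b = d := by
    have : b ∈ ({c, d} : Finset α) := by rw [← h]; simp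
    simpa using this
  rcases ha with ha | ha
  · rcases hb with hb | hb
    · rw [ha, hb] at h1; exact absurd h1 (lt_irrefl _)
    · exact ⟨ha, hb⟩
  · rcases hb with hb | hb
    · rw [ha, hb] at h1; exact absurd (lt_trans h1 h2) (lt_irrefl _)
    · rw [ha, hb] at h1; exact absurd h1 (lt_irrefl _)

section Construction

variable {v : Fin (2*n) → DyckStep}

/-- the opener of `j` as an element of `Fin (2*n)`. -/
def gfin (v : Fin (2*n) → DyckStep) (j : Fin (2*n)) : Fin (2*n) :=
  if h : gma v (j:ℕ) < 2*n then ⟨gma v (j:ℕ), h⟩ else j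

/-- the matching associated to a Dyck word. -/
def mot (v : Fin (2*n) → DyckStep) : Finset (Finset (Fin (2*n))) :=
  (Finset.univ.filter (fun j : Fin (2*n) => v j = D)).image
    (fun j => ({gfin v j, j} : Finset (Fin (2*n))))

lemma mem_mot {p : Finset (Fin (2*n))} :
    p ∈ mot v ↔ ∃ j : Fin (2*n), v j = D ∧ p = ({gfin v j, j} : Finset (Fin (2*n))) := by
  simp only [mot, Finset.mem_image, Finset.mem_filter, Finset.mem_univ, true_and]
  constructor
  · rintro ⟨j, hj, rfl⟩; exact ⟨j, hj, rfl⟩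
  · rintro ⟨j, hj, rfl⟩; exact ⟨j, hj, rfl⟩

variable (hv : IsDyck v)
include hv

lemma gfin_val {j : Fin (2*n)} (hD : v j = D) : (gfin v j : ℕ) = gma v (j:ℕ) := by
  have h := gma_lt hv j.isLt hD
  rw [gfin, dif_pos (lt_trans h j.isLt)]

lemma gfin_lt {j : Fin (2*n)} (hD : v j = D) : gfin v j < j := by
  rw [Fin.lt_def, gfin_val hv hD]
  exact gma_lt hv j.isLt hD

lemma gfin_U {j : Fin (2*n)} (hD : v j = D) : v (gfin v j) = U := by
  obtain ⟨h, hU⟩ := gma_U hv j.isLt hD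
  have : gfin v j = ⟨gma v (j:ℕ), h⟩ := Fin.ext (gfin_val hv hD)
  rw [this]
  exact hU

lemma mot_pm : IsPerfectMatching n (mot v) := by
  constructor
  · intro p hp
    obtain ⟨j, hj, rfl⟩ := mem_mot.mp hp
    exact Finset.card_eq_two.mpr ⟨_, _, ne_of_lt (gfin_lt hv hj), rfl⟩
  · intro x
    rcases (v x).dichotomy with hU | hD
    · -- x is an opener
      obtain ⟨j, ⟨hj, hjD, hjg⟩, huniq⟩ := opener_closed hv x.isLt hU
      have hjDD : v ⟨j, hj⟩ = D := hjD
      refine ⟨({gfin v ⟨j, hj⟩, ⟨j, hj⟩} : Finset (Fin (2*n))), ⟨?_, ?_⟩, ?_⟩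
      · exact mem_mot.mpr ⟨⟨j, hj⟩, hjDD, rfl⟩
      · have : gfin v ⟨j, hj⟩ = x := Fin.ext (by rw [gfin_val hv hjDD]; exact hjg)
        rw [this]
        exact Finset.mem_insert_self _ _
      · rintro q ⟨hq, hxq⟩
        obtain ⟨j', hj'D, rfl⟩ := mem_mot.mp hq
        rcases Finset.mem_insert.mp hxq with h | h
        · have hg' : gma v ((j':Fin (2*n)):ℕ) = (x:ℕ) := by
            rw [← gfin_val hv hj'D, h]
          have : (j' : ℕ) = j := huniq (j':ℕ) ⟨j'.isLt, hj'D, hg'⟩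
          have hj'eq : j' = ⟨j, hj⟩ := Fin.ext this
          rw [hj'eq]
        · rw [Finset.mem_singleton] at h
          rw [← h] at hj'D
          rw [hU] at hj'D
          exact absurd hj'D (by simp)
    · -- x is a closer
      refine ⟨({gfin v x, x} : Finset (Fin (2*n))), ⟨mem_mot.mpr ⟨x, hD, rfl⟩, ?_⟩, ?_⟩
      · exact Finset.mem_insert.mpr (Or.inr (Finset.mem_singleton_self _))
      · rintro q ⟨hq, hxq⟩
        obtain ⟨j', hj'D, rfl⟩ := mem_mot.mp hq
        rcases Finset.mem_insert.mp hxq with h | h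
        · have := gfin_U hv hj'D
          rw [← h, hD] at this
          exact absurd this (by simp)
        · rw [Finset.mem_singleton] at h
          rw [← h]

lemma mot_nc : IsNonCrossing n (mot v) := by
  rintro ⟨a, b, c, d, hac, hcb, hbd, hab, hcd⟩
  obtain ⟨jb, hjbD, hb⟩ := mem_mot.mp hab
  obtain ⟨jd, hjdD, hd⟩ := mem_mot.mp hcd
  obtain ⟨ha1, hb1⟩ := pair_inj hb (lt_trans hac hcb) (gfin_lt hv hjbD)
  obtain ⟨hc1, hd1⟩ := pair_inj hd (lt_trans hcb hbd) (gfin_lt hv hjdD)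
  have hA : (a:ℕ) = gma v (jb:ℕ) := by rw [ha1, gfin_val hv hjbD]
  have hC : (c:ℕ) = gma v (jd:ℕ) := by rw [hc1, gfin_val hv hjdD]
  have hB : (b:ℕ) = (jb:ℕ) := by rw [hb1]
  have hD2 : (d:ℕ) = (jd:ℕ) := by rw [hd1]
  have hac' := Fin.lt_def.mp hac
  have hcb' := Fin.lt_def.mp hcb
  have hbd' := Fin.lt_def.mp hbd
  have h1 : ht v ((jb:ℕ)+1) < ht v (c:ℕ) :=
    gma_lt_ht hv jb.isLt hjbD (by omega) (by omega)
  have h2 : ht v ((jd:ℕ)+1) < ht v ((jb:ℕ)+1) :=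
    gma_lt_ht hv jd.isLt hjdD (by omega) (by omega)
  have h3 : ht v (c:ℕ) = ht v ((jd:ℕ)+1) := by
    rw [hC]; exact gma_ht hv jd.isLt hjdD
  omega

lemma wrd_mot : wrd (mot v) = v := by
  funext x
  have hpm := mot_pm hv
  rcases (v x).dichotomy with hU | hD
  · rw [hU, wrd_eq_U_iff]
    obtain ⟨j, ⟨hj, hjD, hjg⟩, -⟩ := opener_closed hv x.isLt hU
    have hgf : gfin v ⟨j, hj⟩ = x := Fin.ext (by rw [gfin_val hv hjD]; exact hjg)
    have hmem : ({x, (⟨j, hj⟩ : Fin (2*n))} : Finset (Fin (2*n))) ∈ mot v := by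
      rw [← hgf]
      exact mem_mot.mpr ⟨⟨j, hj⟩, hjD, rfl⟩
    have hlt : x < (⟨j, hj⟩ : Fin (2*n)) := by
      rw [Fin.lt_def]
      show (x:ℕ) < j
      rw [← hjg]
      exact gma_lt hv hj hjD
    rw [ptn_eq_of_mem hpm (ne_of_gt hlt) hmem]
    exact hlt
  · rw [hD, wrd_eq_D_iff hpm]
    have hmem : ({x, gfin v x} : Finset (Fin (2*n))) ∈ mot v := by
      rw [Finset.pair_comm]
      exact mem_mot.mpr ⟨x, hD, rfl⟩
    rw [ptn_eq_of_mem hpm (ne_of_lt (gfin_lt hv hD)) hmem]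
    exact gfin_lt hv hD

end Construction

section Bridge

lemma listcount (v : Fin (2*n) → DyckStep) (s : DyckStep) (k : ℕ) :
    ((List.ofFn v).take k).count s = cnt v s k := by
  induction k with
  | zero => simp [cnt_zero]
  | succ k ih =>
    rw [List.take_succ, List.count_append, ih, cnt_succ]
    congr 1
    by_cases h : k < 2*n
    · rw [List.getElem?_ofFn, dif_pos h, dif_pos h]
      by_cases hs : v ⟨k, h⟩ = s
      · rw [if_pos hs]
        simp [hs]
      · rw [if_neg hs]
        simp only [Option.toList_some, List.count_singleton]
        simp [hs]
    · rw [List.getElem?_ofFn, dif_neg h, dif_neg h]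
      simp

lemma count_ofFn (v : Fin (2*n) → DyckStep) (s : DyckStep) :
    (List.ofFn v).count s = cnt v s (2*n) := by
  have h : (List.ofFn v).take (2*n) = List.ofFn v := by
    have := List.take_length (l := List.ofFn v)
    rwa [List.length_ofFn] at this
  rw [← h, listcount]

lemma cnt_total (v : Fin (2*n) → DyckStep) :
    cnt v U (2*n) + cnt v D (2*n) = 2*n := by
  have h1 : ∀ i : Fin (2*n), ((i:ℕ) < 2*n ∧ v i = U) ↔ v i = U :=
    fun i => ⟨fun h => h.2, fun h => ⟨i.isLt, h⟩⟩
  have h2 : ∀ i : Fin (2*n), ((i:ℕ) < 2*n ∧ v i = D) ↔ ¬ v i = U := by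
    intro i
    constructor
    · rintro ⟨-, h⟩ h'
      rw [h'] at h
      exact absurd h (by simp)
    · intro h
      exact ⟨i.isLt, (v i).dichotomy.resolve_left h⟩
  rw [cnt, cnt, Finset.filter_congr (fun i _ => h1 i), Finset.filter_congr (fun i _ => h2 i),
    Finset.card_filter_add_card_filter_not]
  simp

/-- the Dyck word of a Dyck function -/
def toWord (v : Fin (2*n) → DyckStep) (hv : IsDyck v) : DyckWord where
  toList := List.ofFn v
  count_U_eq_count_D := by
    rw [count_ofFn, count_ofFn]
    have h1 := hv.1 (2*n)
    have h2 := hv.2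
    rw [ht] at h2
    omega
  count_D_le_count_U i := by
    rw [listcount, listcount]
    have := hv.1 i
    rw [ht] at this
    omega

lemma toWord_semilength (v : Fin (2*n) → DyckStep) (hv : IsDyck v) :
    (toWord v hv).semilength = n := by
  have h2 := hv.2
  rw [ht] at h2
  have := cnt_total v
  rw [DyckWord.semilength]
  show (List.ofFn v).count U = n
  rw [count_ofFn]
  omega

end Bridge

theorem main_card (n : ℕ) :
    {M : Finset (Finset (Fin (2 * n))) |
        IsPerfectMatching n M ∧ IsNonCrossing n M}.ncard = catalan n := by
  rw [← Nat.card_coe_set_eq, ← DyckWord.card_dyckWord_semilength_eq_catalan n,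
    ← Nat.card_eq_fintype_card]
  apply Nat.card_congr
  refine Equiv.ofBijective
    (fun M => ⟨toWord (wrd M.1) (wrd_isDyck M.2.1), toWord_semilength _ _⟩) ⟨?_, ?_⟩
  · rintro ⟨M₁, hM₁, hNC₁⟩ ⟨M₂, hM₂, hNC₂⟩ h
    simp only [Subtype.mk.injEq] at h
    have hlist : List.ofFn (wrd M₁) = List.ofFn (wrd M₂) := congrArg DyckWord.toList h
    have hw : wrd M₁ = wrd M₂ := List.ofFn_inj.mp hlist
    have : M₁ = M₂ := le_antisymm (subset_of_wrd_eq hM₁ hNC₁ hM₂ hNC₂ hw)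
      (subset_of_wrd_eq hM₂ hNC₂ hM₁ hNC₁ hw.symm)
    exact Subtype.ext this
  · rintro ⟨p, hp⟩
    have hlen : p.toList.length = 2*n := by
      rw [← p.two_mul_semilength_eq_length, hp]
    set v : Fin (2*n) → DyckStep := fun i => p.toList.get ⟨(i:ℕ), by rw [hlen]; exact i.isLt⟩
      with hvdef
    have hofn : List.ofFn v = p.toList := by
      apply List.ext_get
      · rw [List.length_ofFn, hlen]
      · intro i h1 h2
        rw [List.get_ofFn]
        simp [hvdef]
    have hv : IsDyck v := by
      constructor
      · intro k
        rw [ht]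
        have := p.count_D_le_count_U k
        rw [← hofn, listcount, listcount] at this
        omega
      · rw [ht]
        have := p.count_U_eq_count_D
        rw [← hofn, count_ofFn, count_ofFn] at this
        omega
    refine ⟨⟨mot v, mot_pm hv, mot_nc hv⟩, ?_⟩
    apply Subtype.ext
    apply DyckWord.ext
    show List.ofFn (wrd (mot v)) = p.toList
    rw [wrd_mot hv, hofn]

end NCM

/-- The number of non-crossing perfect matchings of `{1, ..., 2n}` equals the
`n`-th Catalan number, i.e. `(1/(n+1)) * binomial(2n, n)`. -/
theorem ncard_noncrossing_perfect_matchings (n : ℕ) :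
    {M : Finset (Finset (Fin (2 * n))) |
        IsPerfectMatching n M ∧ IsNonCrossing n M}.ncard = catalan n ∧
      (n + 1) * catalan n = Nat.choose (2 * n) n := by
  refine ⟨NCM.main_card n, ?_⟩
  rw [show Nat.choose (2*n) n = Nat.centralBinom n from rfl]
  exact succ_mul_catalan_eq_centralBinom n
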